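/- arXiv:q-alg/9711004 — 2 statements merged into one kernel-verified Lean document; each statement's English description precedes it below -/
import Mathlib

section
/- For the rank-one Dunkl kernel with parameter k ≥ 0, defined by K(z,w) = j_{k-1/2}(izw) + (zw/(2k+1)) j_{k+1/2}(izw) where j_α(z) = Γ(α+1) Σ_{n≥0} (-1)^n (z/2)^{2n} / (n! Γ(n+α+1)), we have K(x,y) > 0 for all real x, y. -/
/-- Normalized spherical Bessel function `j_α`. -/
noncomputable def jBessel (α : ℂ) (z : ℂ) : ℂ :=
  Complex.Gamma (α + 1) *
    ∑' n : ℕ, ((-1 : ℂ) ^ n * (z / 2) ^ (2 * n) /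
      ((n.factorial : ℂ) * Complex.Gamma ((n : ℂ) + α + 1)))

/-- The rank-one (`ℤ₂`) Dunkl kernel with parameter `k`. -/
noncomputable def dunklK (k : ℝ) (z w : ℂ) : ℂ :=
  jBessel ((k : ℂ) - 1/2) (Complex.I * z * w) +
    (z * w / (2 * (k : ℂ) + 1)) * jBessel ((k : ℂ) + 1/2) (Complex.I * z * w)

namespace DunklPos

noncomputable def qq (c : ℝ) (n : ℕ) : ℝ := ∏ i ∈ Finset.range n, (c + i)

lemma qq_pos {c : ℝ} (hc : 0 < c) (n : ℕ) : 0 < qq c n :=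
  Finset.prod_pos fun i _ => by positivity

lemma qq_succ (c : ℝ) (n : ℕ) : qq c (n + 1) = qq c n * (c + n) :=
  Finset.prod_range_succ _ _

lemma qq_ge {c : ℝ} (hc : (1:ℝ)/2 ≤ c) (n : ℕ) : ((1:ℝ)/2) ^ n ≤ qq c n := by
  have h : ((1:ℝ)/2) ^ n = ∏ i ∈ Finset.range n, ((1:ℝ)/2) := by simp
  rw [h]
  refine Finset.prod_le_prod (fun i _ => by norm_num) (fun i _ => ?_)
  have : (0:ℝ) ≤ i := Nat.cast_nonneg i
  linarith

lemma qq_shift (c : ℝ) (n : ℕ) : qq c (n + 1) = c * qq (c + 1) n := by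
  induction n with
  | zero => simp [qq]
  | succ n ih =>
    rw [qq_succ, ih, qq_succ]
    push_cast
    ring

noncomputable def aa (c : ℝ) (n : ℕ) : ℝ := 1 / (n.factorial * qq c n)
noncomputable def bb (c : ℝ) (n : ℕ) : ℝ := 1 / (n.factorial * qq c (n + 1))

noncomputable def gg (c : ℝ) (m : ℕ) : ℝ := if Even m then aa c (m / 2) else bb c (m / 2)

noncomputable def ff (c : ℝ) (m : ℕ) : ℝ := (-1) ^ m * gg c m

lemma gg_two_mul (c : ℝ) (n : ℕ) : gg c (2 * n) = aa c n := by
  simp [gg, Nat.mul_div_cancel_left _ (by norm_num : 0 < 2)]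

lemma gg_two_mul_add_one (c : ℝ) (n : ℕ) : gg c (2 * n + 1) = bb c n := by
  have h1 : ¬ Even (2 * n + 1) := by simp [Nat.even_add_one, parity_simps]
  have h2 : (2 * n + 1) / 2 = n := by omega
  simp [gg, h1, h2]

lemma ff_two_mul (c : ℝ) (n : ℕ) : ff c (2 * n) = aa c n := by
  simp [ff, gg_two_mul, pow_mul]

lemma ff_two_mul_add_one (c : ℝ) (n : ℕ) : ff c (2 * n + 1) = - bb c n := by
  simp [ff, gg_two_mul_add_one, pow_succ, pow_mul]

lemma bb_pos {c : ℝ} (hc : 0 < c) (n : ℕ) : 0 < bb c n := by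
  have := qq_pos hc (n+1); unfold bb; positivity

lemma gg_pos {c : ℝ} (hc : 0 < c) (m : ℕ) : 0 < gg c m := by
  unfold gg aa bb
  have h1 := qq_pos hc (m/2); have h2 := qq_pos hc (m/2+1)
  split <;> positivity

lemma aa_eq {c : ℝ} (hc : 0 < c) (n : ℕ) : aa c n = (c + n) * bb c n := by
  unfold aa bb
  rw [qq_succ]
  have h1 := qq_pos hc n
  have h2 : (0:ℝ) < (n.factorial : ℝ) := by positivity
  have h3 : (0:ℝ) < c + n := by positivity
  field_simp

lemma aa_succ_eq {c : ℝ} (hc : 0 < c) (n : ℕ) :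
    ((n:ℝ) + 1) * aa c (n + 1) = bb c n := by
  unfold aa bb
  rw [Nat.factorial_succ]
  have h1 := qq_pos hc (n+1)
  have h2 : (0:ℝ) < (n.factorial : ℝ) := by positivity
  have h3 : (0:ℝ) < (n:ℝ) + 1 := by positivity
  push_cast
  field_simp

lemma gg_le {c : ℝ} (hc : (1:ℝ)/2 ≤ c) (m : ℕ) :
    gg c m ≤ 2 ^ m / ((m / 2).factorial : ℝ) := by
  have hc0 : 0 < c := by linarith
  have key : ∀ j : ℕ, j ≤ m → 1 / qq c j ≤ 2 ^ m := by
    intro j hj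
    have h1 : ((1:ℝ)/2) ^ m ≤ ((1:ℝ)/2) ^ j :=
      pow_le_pow_of_le_one (by norm_num) (by norm_num) hj
    have h2 : ((1:ℝ)/2) ^ m ≤ qq c j := h1.trans (qq_ge hc j)
    rw [div_le_iff₀ (qq_pos hc0 j)]
    have h3 : ((1:ℝ)/2) ^ m * 2 ^ m = 1 := by
      rw [div_pow, one_pow, div_mul_cancel₀]; positivity
    have h4 : (0:ℝ) < (2:ℝ)^m := by positivity
    nlinarith
  have hf : (0:ℝ) < ((m/2).factorial : ℝ) := by positivity
  unfold gg aa bb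
  split
  · have := key (m/2) (by omega)
    rw [div_le_div_iff₀ (by have := qq_pos hc0 (m/2); positivity) hf]
    rw [div_le_iff₀ (qq_pos hc0 (m/2))] at this
    nlinarith [qq_pos hc0 (m/2)]
  · have hodd : ¬ Even m := by assumption
    have hm1 : m % 2 = 1 := Nat.odd_iff.mp (Nat.not_even_iff_odd.mp hodd)
    have hj : m / 2 + 1 ≤ m := by omega
    have := key (m/2+1) hj
    rw [div_le_div_iff₀ (by have := qq_pos hc0 (m/2+1); positivity) hf]
    rw [div_le_iff₀ (qq_pos hc0 (m/2+1))] at this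
    nlinarith [qq_pos hc0 (m/2+1)]

lemma summable_pow_div_half_factorial (r : ℝ) :
    Summable (fun m : ℕ => r ^ m / ((m / 2).factorial : ℝ)) := by
  apply Summable.even_add_odd
  · have h := Real.summable_pow_div_factorial (r ^ 2)
    refine h.congr fun n => ?_
    rw [Nat.mul_div_cancel_left _ (by norm_num : 0 < 2), ← pow_mul]
  · have h := (Real.summable_pow_div_factorial (r ^ 2)).mul_left r
    refine h.congr fun n => ?_
    have h2 : (2 * n + 1) / 2 = n := by omega
    rw [h2, ← pow_mul, ← mul_div_assoc, ← pow_succ']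

lemma summable_abs_gg_mul_pow {c : ℝ} (hc : (1:ℝ)/2 ≤ c) (t : ℝ) :
    Summable (fun m : ℕ => |gg c m * t ^ m|) := by
  have hc0 : 0 < c := by linarith
  refine Summable.of_nonneg_of_le (fun m => abs_nonneg _)
    (fun m => ?_) (summable_pow_div_half_factorial (2 * |t|))
  have h1 : |gg c m * t ^ m| = gg c m * |t| ^ m := by
    rw [abs_mul, abs_of_pos (gg_pos hc0 m), abs_pow]
  rw [h1, mul_pow]
  have h2 := gg_le hc m
  have h3 : (0:ℝ) ≤ |t| ^ m := by positivity
  calc gg c m * |t| ^ m ≤ (2 ^ m / ((m / 2).factorial : ℝ)) * |t| ^ m := by nlinarith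
    _ = 2 ^ m * |t| ^ m / ((m / 2).factorial : ℝ) := by ring

lemma summable_gg_mul_pow {c : ℝ} (hc : (1:ℝ)/2 ≤ c) (t : ℝ) :
    Summable (fun m : ℕ => gg c m * t ^ m) :=
  (summable_abs_gg_mul_pow hc t).of_abs

lemma step_nonneg {c : ℝ} (hc : (1:ℝ)/2 ≤ c) (i : ℕ) :
    0 ≤ 2 * ff c i + ((i:ℝ) + 1) * ff c (i + 1) := by
  have hc0 : 0 < c := by linarith
  obtain ⟨n, hn | hn⟩ := Nat.even_or_odd' i
  · subst hn
    rw [ff_two_mul, ff_two_mul_add_one, aa_eq hc0]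
    have hb := bb_pos hc0 n
    have h : 2 * ((c + n) * bb c n) + ((2*n:ℝ) + 1) * (- bb c n)
        = (2*c - 1) * bb c n := by push_cast; ring
    push_cast
    rw [h]
    nlinarith
  · subst hn
    have h2 : 2 * n + 1 + 1 = 2 * (n + 1) := by ring
    rw [ff_two_mul_add_one, h2, ff_two_mul]
    have h := aa_succ_eq hc0 n
    push_cast
    nlinarith [h]

lemma key_identity (f : ℕ → ℝ) (m : ℕ) :
    ((m:ℝ) + 1) * (∑ j ∈ Finset.range (m + 2),
        f j * (2 ^ (m + 1 - j) / ((m + 1 - j).factorial : ℝ))) =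
    ∑ i ∈ Finset.range (m + 1),
        (2 * f i + ((i:ℝ) + 1) * f (i + 1)) * (2 ^ (m - i) / ((m - i).factorial : ℝ)) := by
  have part1 :
      (∑ j ∈ Finset.range (m + 2),
          ((m + 1 - j : ℕ) : ℝ) * (f j * (2 ^ (m + 1 - j) / ((m + 1 - j).factorial : ℝ)))) =
      ∑ j ∈ Finset.range (m + 1),
          2 * f j * (2 ^ (m - j) / ((m - j).factorial : ℝ)) := by
    rw [Finset.sum_range_succ]
    simp only [Nat.sub_self, Nat.cast_zero, zero_mul, add_zero]
    refine Finset.sum_congr rfl fun j hj => ?_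
    have hj' : j ≤ m := by simpa [Nat.lt_succ_iff] using hj
    have h1 : m + 1 - j = (m - j) + 1 := by omega
    rw [h1]
    set l := m - j with hl
    rw [Nat.factorial_succ, pow_succ]
    have h2 : (0:ℝ) < (l.factorial : ℝ) := by positivity
    have h3 : (0:ℝ) < ((l:ℝ) + 1) := by positivity
    push_cast
    field_simp
  have part2 :
      (∑ j ∈ Finset.range (m + 2),
          (j : ℝ) * (f j * (2 ^ (m + 1 - j) / ((m + 1 - j).factorial : ℝ)))) =
      ∑ i ∈ Finset.range (m + 1),
          ((i:ℝ) + 1) * f (i + 1) * (2 ^ (m - i) / ((m - i).factorial : ℝ)) := by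
    rw [Finset.sum_range_succ']
    simp only [Nat.cast_zero, zero_mul, add_zero]
    refine Finset.sum_congr rfl fun i hi => ?_
    have h1' : m + 1 - (i + 1) = m - i := by omega
    rw [h1']
    push_cast
    ring
  have lhs_split :
      ((m:ℝ) + 1) * (∑ j ∈ Finset.range (m + 2),
          f j * (2 ^ (m + 1 - j) / ((m + 1 - j).factorial : ℝ))) =
      (∑ j ∈ Finset.range (m + 2),
          ((m + 1 - j : ℕ) : ℝ) * (f j * (2 ^ (m + 1 - j) / ((m + 1 - j).factorial : ℝ)))) +
      ∑ j ∈ Finset.range (m + 2),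
          (j : ℝ) * (f j * (2 ^ (m + 1 - j) / ((m + 1 - j).factorial : ℝ))) := by
    rw [Finset.mul_sum, ← Finset.sum_add_distrib]
    refine Finset.sum_congr rfl fun j hj => ?_
    have hj' : j ≤ m + 1 := by simpa [Nat.lt_succ_iff] using hj
    have h : ((m + 1 - j : ℕ) : ℝ) = (m:ℝ) + 1 - j := by
      push_cast [Nat.cast_sub hj']; ring
    rw [h]; ring
  rw [lhs_split, part1, part2, ← Finset.sum_add_distrib]
  refine Finset.sum_congr rfl fun i _ => ?_
  ring

noncomputable def EE (c : ℝ) (m : ℕ) : ℝ :=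
  ∑ j ∈ Finset.range (m + 1), ff c j * (2 ^ (m - j) / ((m - j).factorial : ℝ))

lemma EE_zero (c : ℝ) : EE c 0 = 1 := by
  simp [EE, ff, gg, aa, qq]

lemma EE_nonneg {c : ℝ} (hc : (1:ℝ)/2 ≤ c) (m : ℕ) : 0 ≤ EE c m := by
  cases m with
  | zero => rw [EE_zero]; norm_num
  | succ m =>
    have hkey := key_identity (ff c) m
    have hpos : (0:ℝ) < (m:ℝ) + 1 := by positivity
    have hsum : 0 ≤ ∑ i ∈ Finset.range (m + 1),
        (2 * ff c i + ((i:ℝ) + 1) * ff c (i + 1)) * (2 ^ (m - i) / ((m - i).factorial : ℝ)) := by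
      refine Finset.sum_nonneg fun i _ => mul_nonneg (step_nonneg hc i) (by positivity)
    have h : 0 ≤ ((m:ℝ) + 1) * EE c (m + 1) := by
      unfold EE
      rw [show m + 1 + 1 = m + 2 from rfl, hkey]
      exact hsum
    exact (mul_nonneg_iff_of_pos_left hpos).mp h

lemma tsum_gg_pos {c : ℝ} (hc : (1:ℝ)/2 ≤ c) (t : ℝ) :
    0 < ∑' m : ℕ, gg c m * t ^ m := by
  have hc0 : 0 < c := by linarith
  rcases le_or_gt 0 t with ht | ht
  · have h1 : gg c 0 * t ^ 0 ≤ ∑' m : ℕ, gg c m * t ^ m :=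
      Summable.le_tsum (summable_gg_mul_pow hc t) 0
        (fun j _ => mul_nonneg (gg_pos hc0 j).le (by positivity))
    have h0 : gg c 0 * t ^ 0 = 1 := by simp [gg, aa, qq]
    linarith
  · set u : ℝ := -t with hu
    have hu0 : 0 < u := by simp [hu]; linarith
    have hterm : ∀ m : ℕ, gg c m * t ^ m = ff c m * u ^ m := by
      intro m
      rw [ff, show t = -u by rw [hu]; ring, neg_pow]
      ring
    rw [tsum_congr hterm]
    have hffn : Summable (fun m : ℕ => ‖ff c m * u ^ m‖) := by
      refine (summable_abs_gg_mul_pow hc u).congr fun m => ?_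
      simp [Real.norm_eq_abs, ff, abs_mul, abs_pow]
    have hff : Summable (fun m : ℕ => ff c m * u ^ m) := hffn.of_norm
    have hgn : Summable (fun m : ℕ => ‖(2 * u) ^ m / (m.factorial : ℝ)‖) := by
      refine (Real.summable_pow_div_factorial (2 * u)).congr fun m => ?_
      rw [Real.norm_eq_abs, abs_of_nonneg (by positivity)]
    have hg : Summable (fun m : ℕ => (2 * u) ^ m / (m.factorial : ℝ)) := hgn.of_norm
    have hexp : Real.exp (2 * u) = ∑' m : ℕ, (2 * u) ^ m / (m.factorial : ℝ) := by
      rw [Real.exp_eq_exp_ℝ, NormedSpace.exp_eq_tsum_div]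
    have hcauchy :
        (∑' m : ℕ, ff c m * u ^ m) * ∑' m : ℕ, (2 * u) ^ m / (m.factorial : ℝ) =
          ∑' n : ℕ, ∑ j ∈ Finset.range (n + 1),
            (ff c j * u ^ j) * ((2 * u) ^ (n - j) / ((n - j).factorial : ℝ)) :=
      tsum_mul_tsum_eq_tsum_sum_range_of_summable_norm hffn hgn
    have hinner : ∀ n : ℕ, (∑ j ∈ Finset.range (n + 1),
        (ff c j * u ^ j) * ((2 * u) ^ (n - j) / ((n - j).factorial : ℝ))) = u ^ n * EE c n := by
      intro n
      rw [EE, Finset.mul_sum]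
      refine Finset.sum_congr rfl fun j hj => ?_
      have hj' : j ≤ n := by simpa [Nat.lt_succ_iff] using hj
      have hpow : u ^ j * u ^ (n - j) = u ^ n := by
        rw [← pow_add]; congr 1; omega
      rw [mul_pow]
      have hfac : (0:ℝ) < ((n - j).factorial : ℝ) := by positivity
      field_simp
      linear_combination (ff c j) * hpow
    have hS : Summable (fun n : ℕ => u ^ n * EE c n) := by
      refine (summable_sum_mul_range_of_summable_norm' hffn hff hgn hg).congr fun n => ?_
      exact hinner n
    have hge : (1:ℝ) ≤ ∑' n : ℕ, u ^ n * EE c n := by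
      have h0 : u ^ 0 * EE c 0 = 1 := by rw [EE_zero]; simp
      have := Summable.le_tsum hS 0 (fun j _ => mul_nonneg (by positivity) (EE_nonneg hc j))
      linarith
    have hprod : (1:ℝ) ≤ (∑' m : ℕ, ff c m * u ^ m) * Real.exp (2 * u) := by
      rw [hexp, hcauchy, tsum_congr hinner]
      exact hge
    nlinarith [Real.exp_pos (2 * u), hprod]

lemma gamma_shift {d : ℝ} (hd : 0 < d) (n : ℕ) :
    Real.Gamma ((n:ℝ) + d) = Real.Gamma d * qq d n := by
  induction n with
  | zero => simp [qq]
  | succ n ih =>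
    have h1 : ((n:ℝ) + 1) + d = ((n:ℝ) + d) + 1 := by ring
    have h2 : ((n:ℝ) + d) ≠ 0 := by positivity
    rw [Nat.cast_succ, h1, Real.Gamma_add_one h2, ih, qq_succ]
    ring

lemma jBessel_ofReal {d : ℝ} (hd : 0 < d) (x y : ℝ) :
    jBessel ((d:ℂ) - 1) (Complex.I * x * y) =
      ((∑' n : ℕ, (x * y / 2) ^ (2 * n) / (n.factorial * qq d n) : ℝ) : ℂ) := by
  set s : ℝ := x * y / 2 with hs
  have hΓ : (0:ℝ) < Real.Gamma d := Real.Gamma_pos_of_pos hd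
  unfold jBessel
  have hterm : ∀ n : ℕ,
      ((-1 : ℂ) ^ n * ((Complex.I * x * y) / 2) ^ (2 * n) /
        ((n.factorial : ℂ) * Complex.Gamma ((n : ℂ) + ((d:ℂ) - 1) + 1))) =
      ((s ^ (2 * n) / (n.factorial * (Real.Gamma d * qq d n)) : ℝ) : ℂ) := by
    intro n
    have hz : ((Complex.I * x * y) / 2) ^ (2 * n) = (-1 : ℂ) ^ n * ((s:ℝ) : ℂ) ^ (2 * n) := by
      rw [pow_mul, pow_mul]
      have h : ((Complex.I * x * y) / 2) ^ 2 = (-1) * (((s:ℝ) : ℂ)) ^ 2 := by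
        rw [hs]
        push_cast
        ring_nf
        rw [Complex.I_sq]
        ring
      rw [h, mul_pow]
    have hγ : Complex.Gamma ((n : ℂ) + ((d:ℂ) - 1) + 1) =
        ((Real.Gamma d * qq d n : ℝ) : ℂ) := by
      have h1 : (n : ℂ) + ((d:ℂ) - 1) + 1 = (((n:ℝ) + d : ℝ) : ℂ) := by push_cast; ring
      rw [h1, Complex.Gamma_ofReal, gamma_shift hd n]
    rw [hz, hγ]
    rw [← mul_assoc, ← mul_pow]
    norm_num
  rw [tsum_congr hterm, ← Complex.ofReal_tsum]
  have h2 : (d:ℂ) - 1 + 1 = (((d:ℝ)):ℂ) := by ring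
  rw [h2, Complex.Gamma_ofReal, ← Complex.ofReal_mul]
  congr 1
  rw [← tsum_mul_left]
  refine tsum_congr fun n => ?_
  have h3 := qq_pos hd n
  have h4 : (0:ℝ) < (n.factorial : ℝ) := by positivity
  field_simp

lemma dunklK_eq (k : ℝ) (hk : 0 ≤ k) (x y : ℝ) :
    dunklK k x y = ((∑' m : ℕ, gg (k + 1/2) m * (x * y / 2) ^ m : ℝ) : ℂ) := by
  have hc2 : (1:ℝ)/2 ≤ k + 1/2 := by linarith
  have hc0 : (0:ℝ) < k + 1/2 := by linarith
  have h1 : ((k : ℂ) - 1/2) = ((k + 1/2 : ℝ):ℂ) - 1 := by push_cast; ring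
  have h2 : ((k : ℂ) + 1/2) = ((k + 1/2 + 1 : ℝ):ℂ) - 1 := by push_cast; ring
  have hne : (2 * (k:ℂ) + 1) ≠ 0 := by
    intro h
    have h' : (2 * (k:ℂ) + 1).re = 0 := by rw [h]; simp
    simp [Complex.add_re, Complex.mul_re] at h'
    linarith
  have h3 : ((x:ℂ) * y / (2 * (k:ℂ) + 1)) = (((x * y / 2) / (k + 1/2) : ℝ) : ℂ) := by
    push_cast
    rw [div_div, div_eq_div_iff hne]
    · ring
    · intro h
      have h' : ((2:ℂ) * ((k:ℂ) + 1/2)).re = 0 := by rw [h]; simp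
      simp [Complex.mul_re, Complex.add_re] at h'
      linarith
  rw [dunklK, h1, h2, jBessel_ofReal hc0 x y,
    jBessel_ofReal (by linarith : (0:ℝ) < k + 1/2 + 1) x y, h3,
    ← Complex.ofReal_mul, ← Complex.ofReal_add]
  congr 1
  set c : ℝ := k + 1/2 with hc
  set s : ℝ := x * y / 2 with hs
  have heven : Summable (fun n : ℕ => gg c (2 * n) * s ^ (2 * n)) :=
    (summable_gg_mul_pow hc2 s).comp_injective (fun a b h => by omega)
  have hodd : Summable (fun n : ℕ => gg c (2 * n + 1) * s ^ (2 * n + 1)) :=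
    (summable_gg_mul_pow hc2 s).comp_injective (fun a b h => by omega)
  refine Eq.trans ?_ (tsum_even_add_odd (f := fun m => gg c m * s ^ m) heven hodd)
  congr 1
  · refine tsum_congr fun n => ?_
    simp only [gg_two_mul, aa]
    ring
  · rw [← tsum_mul_left]
    refine tsum_congr fun n => ?_
    simp only [gg_two_mul_add_one, bb, qq_shift]
    have h4 := qq_pos (by linarith : (0:ℝ) < c + 1) n
    have h5 : (0:ℝ) < (n.factorial : ℝ) := by positivity
    field_simp
    ring

end DunklPos

/-- For `k ≥ 0`, the rank-one Dunkl kernel is (real and) strictly positive on `ℝ × ℝ`. -/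
theorem dunklK_pos (k : ℝ) (hk : 0 ≤ k) (x y : ℝ) :
    0 < (dunklK k x y).re ∧ (dunklK k x y).im = 0 := by
  rw [DunklPos.dunklK_eq k hk x y]
  exact ⟨by simpa using DunklPos.tsum_gg_pos (by linarith : (1:ℝ)/2 ≤ k + 1/2) (x * y / 2),
    Complex.ofReal_im _⟩
end

section
/- Adjoint relation for the Z₂ Dunkl operator: for k ≥ 0, the operator T* f(x) = x f(x) - T f(x), where T f(x) = f'(x) + k(f(x)-f(-x))/x, satisfies ∫_ℝ (Tf)(x) g(x) w(x) e^{-x²/2} dx = ∫_ℝ f(x) (T*g)(x) w(x) e^{-x²/2} dx for all polynomials f, g, where w(x) = |x|^{2k}. -/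
open Polynomial MeasureTheory Real Set Filter

lemma P_mul (f : ℝ[X]) : X * ((f - f.comp (-X)) /ₘ X) = f - f.comp (-X) := by
  have hdvd : (X : ℝ[X]) ∣ f - f.comp (-X) := by
    rw [X_dvd_iff]
    simp [coeff_zero_eq_eval_zero, eval_comp]
  obtain ⟨r, hr⟩ := hdvd
  rw [hr, mul_divByMonic_cancel_left _ monic_X]

lemma P_comp_neg (f : ℝ[X]) :
    ((f - f.comp (-X)) /ₘ X).comp (-X) = (f - f.comp (-X)) /ₘ X := by
  apply mul_left_cancel₀ (X_ne_zero : (X : ℝ[X]) ≠ 0)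
  have h1 : (X : ℝ[X]) * ((f - f.comp (-X)) /ₘ X).comp (-X)
      = -(((f - f.comp (-X)) ).comp (-X)) := by
    have := congrArg (fun p => Polynomial.comp p (-X)) (P_mul f)
    simp only [mul_comp, X_comp] at this
    linear_combination -this
  rw [h1, P_mul, sub_comp, comp_assoc, neg_comp, X_comp, neg_neg, comp_X]
  ring

lemma P_add (f g : ℝ[X]) :
    ((f + g) - (f + g).comp (-X)) /ₘ X
      = (f - f.comp (-X)) /ₘ X + (g - g.comp (-X)) /ₘ X := by
  apply mul_left_cancel₀ (X_ne_zero : (X : ℝ[X]) ≠ 0)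
  rw [mul_add, P_mul, P_mul, P_mul, add_comp]
  ring

/-- The rank-one (`ℤ₂`) Dunkl operator on polynomials:
`T p = p' + k·(p(x) - p(-x))/x`, where the difference quotient is exact polynomial
division by `X`. -/
noncomputable def dunklT (k : ℝ) (p : Polynomial ℝ) : Polynomial ℝ :=
  derivative p + C k * ((p - p.comp (-X)) /ₘ X)

lemma dunklT_add (k : ℝ) (f g : ℝ[X]) :
    dunklT k (f + g) = dunklT k f + dunklT k g := by
  simp only [dunklT, derivative_add, P_add]; ring

lemma key_P (f g : ℝ[X]) :
    ((f * g) - (f * g).comp (-X)) /ₘ X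
      = (f - f.comp (-X)) /ₘ X * g + f * ((g - g.comp (-X)) /ₘ X)
        - X * (((f - f.comp (-X)) /ₘ X) * ((g - g.comp (-X)) /ₘ X)) := by
  apply mul_left_cancel₀ (X_ne_zero : (X : ℝ[X]) ≠ 0)
  have hf := P_mul f; have hg := P_mul g; have hfg := P_mul (f * g)
  rw [hfg, mul_comp]
  linear_combination (X * ((g - g.comp (-X)) /ₘ X) - g) * hf - f.comp (-X) * hg

lemma key_poly (k : ℝ) (f g : ℝ[X]) :
    dunklT k f * g + f * dunklT k g
      = dunklT k (f * g)
        + C k * (X * (((f - f.comp (-X)) /ₘ X) * ((g - g.comp (-X)) /ₘ X))) := by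
  simp only [dunklT, derivative_mul, key_P]
  ring

lemma dunklT_smul (k a : ℝ) (f : ℝ[X]) : dunklT k (C a * f) = C a * dunklT k f := by
  have hP : ((C a * f) - (C a * f).comp (-X)) /ₘ X = C a * ((f - f.comp (-X)) /ₘ X) := by
    apply mul_left_cancel₀ (X_ne_zero : (X : ℝ[X]) ≠ 0)
    rw [P_mul, mul_comp, C_comp]
    have := P_mul f
    linear_combination -(C a * this)
  simp only [dunklT, derivative_C_mul, hP]
  ring

lemma dunklT_odd_parity (k : ℝ) (p : ℝ[X]) (hp : p.comp (-X) = p) :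
    (dunklT k p).comp (-X) = -dunklT k p := by
  have h0 : p - p.comp (-X) = 0 := by rw [hp]; ring
  have hd : (derivative p).comp (-X) = -derivative p := by
    have := congrArg derivative hp
    rw [derivative_comp] at this
    simp only [derivative_neg, derivative_X] at this
    apply mul_left_cancel₀ (neg_ne_zero.mpr (one_ne_zero : (1:ℝ[X]) ≠ 0))
    linear_combination this
  simp only [dunklT, h0, zero_divByMonic, mul_zero, add_zero, hd]


noncomputable def wt (k : ℝ) (x : ℝ) : ℝ := |x| ^ (2 * k) * Real.exp (-x ^ 2 / 2)

lemma continuous_wt {k : ℝ} (hk : 0 ≤ k) : Continuous (wt k) := by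
  unfold wt
  exact ((Real.continuous_rpow_const (by linarith)).comp continuous_abs).mul
    (Real.continuous_exp.comp (by fun_prop))

lemma integrable_abs_rpow_exp {s : ℝ} (hs : 0 ≤ s) :
    Integrable fun x : ℝ => |x| ^ s * Real.exp (-x ^ 2 / 2) := by
  have hmain : IntegrableOn (fun x : ℝ => |x| ^ s * Real.exp (-x ^ 2 / 2)) (Ioi 0) := by
    have h := integrableOn_rpow_mul_exp_neg_mul_sq (b := 1/2) (by norm_num) (s := s) (by linarith)
    refine h.congr_fun (fun x hx => ?_) measurableSet_Ioi
    rw [abs_of_pos hx]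
    ring_nf
  have hneg : IntegrableOn (fun x : ℝ => |x| ^ s * Real.exp (-x ^ 2 / 2)) (Iio 0) := by
    have key := (Measure.measurePreserving_neg (volume : Measure ℝ)).integrableOn_comp_preimage
        (Homeomorph.neg ℝ).measurableEmbedding (s := Ioi 0)
        (f := fun x : ℝ => |x| ^ s * Real.exp (-x ^ 2 / 2))
    have h1 : (Neg.neg ⁻¹' Ioi (0:ℝ)) = Iio 0 := by ext x; simp
    have h2 : ((fun x : ℝ => |x| ^ s * Real.exp (-x ^ 2 / 2)) ∘ Neg.neg)
        = fun x : ℝ => |x| ^ s * Real.exp (-x ^ 2 / 2) := by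
      funext x; simp [Function.comp, abs_neg, neg_sq]
    rw [h1, h2] at key
    exact key.mpr hmain
  have : (univ : Set ℝ) = Iio 0 ∪ Ici 0 := by simp
  rw [← integrableOn_univ, this, integrableOn_union, integrableOn_Ici_iff_integrableOn_Ioi]
  exact ⟨hneg, hmain⟩

lemma abs_rpow_add {x : ℝ} (a b : ℝ) (ha : 0 ≤ a) (hb : 0 ≤ b) :
    |x| ^ (a + b) = |x| ^ a * |x| ^ b := by
  by_cases h : a + b = 0
  · have ha0 : a = 0 := by linarith
    have hb0 : b = 0 := by linarith
    simp [ha0, hb0]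
  · exact Real.rpow_add' (abs_nonneg x) h

lemma integrable_pow_wt {k : ℝ} (hk : 0 ≤ k) (n : ℕ) :
    Integrable fun x : ℝ => x ^ n * wt k x := by
  refine Integrable.mono' (g := fun x => |x| ^ ((n : ℝ) + 2 * k) * Real.exp (-x ^ 2 / 2))
    (integrable_abs_rpow_exp (by positivity)) ?_ ?_
  · exact ((continuous_pow n).mul (continuous_wt hk)).aestronglyMeasurable
  · refine Filter.Eventually.of_forall (fun x => ?_)
    have hwt : 0 ≤ wt k x := by
      unfold wt; positivity
    rw [Real.norm_eq_abs, abs_mul, abs_of_nonneg hwt, abs_pow]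
    unfold wt
    have h : |x| ^ ((n : ℝ) + 2 * k) = |x| ^ n * |x| ^ (2 * k) := by
      rw [abs_rpow_add (n : ℝ) (2 * k) (by positivity) (by positivity), Real.rpow_natCast]
    simp only [h]
    exact le_of_eq (by ring)

lemma integrable_poly_wt {k : ℝ} (hk : 0 ≤ k) (p : ℝ[X]) :
    Integrable fun x : ℝ => p.eval x * wt k x := by
  have heq : (fun x : ℝ => p.eval x * wt k x)
      = fun x => ∑ i ∈ Finset.range (p.natDegree + 1), p.coeff i * (x ^ i * wt k x) := by
    funext x
    rw [Polynomial.eval_eq_sum_range, Finset.sum_mul]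
    simp [mul_assoc]
  rw [heq]
  exact integrable_finset_sum _ (fun i _ => (integrable_pow_wt hk i).const_mul _)

lemma eval_comp_neg (p : ℝ[X]) (x : ℝ) : (p.comp (-X)).eval x = p.eval (-x) := by
  simp [eval_comp]

lemma integral_odd_wt {k : ℝ} (p : ℝ[X]) (hodd : p.comp (-X) = -p) :
    ∫ x : ℝ, p.eval x * wt k x = 0 := by
  have h := integral_neg_eq_self (fun x : ℝ => p.eval x * wt k x) volume
  have heq : ∀ x : ℝ, p.eval (-x) * wt k (-x) = -(p.eval x * wt k x) := by
    intro x
    have h1 : p.eval (-x) = -p.eval x := by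
      rw [← eval_comp_neg, hodd, eval_neg]
    have h2 : wt k (-x) = wt k x := by unfold wt; rw [abs_neg, neg_sq]
    rw [h1, h2]; ring
  simp only [heq, integral_neg] at h
  linarith

lemma integrableOn_rpow_exp_Ioi {s : ℝ} (hs : -1 < s) :
    IntegrableOn (fun x : ℝ => x ^ s * Real.exp (-x ^ 2 / 2)) (Ioi 0) := by
  have h := integrableOn_rpow_mul_exp_neg_mul_sq (b := 1/2) (by norm_num) hs
  refine h.congr_fun (fun x _ => ?_) measurableSet_Ioi
  ring_nf

lemma J_rec {s : ℝ} (hs : 0 ≤ s) :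
    ∫ x in Ioi (0:ℝ), x ^ (s + 2) * Real.exp (-x ^ 2 / 2)
      = (s + 1) * ∫ x in Ioi (0:ℝ), x ^ s * Real.exp (-x ^ 2 / 2) := by
  set F : ℝ → ℝ := fun x => x ^ (s + 1) * Real.exp (-x ^ 2 / 2) with hF
  set F' : ℝ → ℝ := fun x =>
    (s + 1) * (x ^ s * Real.exp (-x ^ 2 / 2)) - x ^ (s + 2) * Real.exp (-x ^ 2 / 2) with hF'
  have hderiv : ∀ x ∈ Ioi (0:ℝ), HasDerivAt F (F' x) x := by
    intro x hx
    have hx0 : (0:ℝ) < x := hx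
    have h1 : HasDerivAt (fun y : ℝ => y ^ (s + 1)) ((s + 1) * x ^ s) x := by
      have := Real.hasDerivAt_rpow_const (x := x) (p := s + 1) (Or.inl hx0.ne')
      simpa using this
    have h2 : HasDerivAt (fun y : ℝ => Real.exp (-y ^ 2 / 2)) (-x * Real.exp (-x ^ 2 / 2)) x := by
      have hinner : HasDerivAt (fun y : ℝ => -y ^ 2 / 2) (-x) x := by
        have := (hasDerivAt_pow 2 x).neg.div_const 2
        simpa using this.congr_deriv (by ring)
      have := (Real.hasDerivAt_exp (-x ^ 2 / 2)).comp x hinner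
      exact this.congr_deriv (by ring)
    have := h1.mul h2
    have hxs2 : x ^ (s + 1) * x = x ^ (s + 2) := by
      rw [← Real.rpow_add_one hx0.ne' (s+1)]; congr 1; ring
    refine this.congr_deriv ?_
    rw [hF']
    simp only
    rw [← hxs2]; ring
  have hcont : ContinuousWithinAt F (Ici 0) 0 := by
    apply Continuous.continuousWithinAt
    exact (Real.continuous_rpow_const (by linarith)).mul
      (Real.continuous_exp.comp (by fun_prop))
  have hint : IntegrableOn F' (Ioi 0) := by
    exact ((integrableOn_rpow_exp_Ioi (by linarith : (-1:ℝ) < s)).const_mul _).sub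
      (integrableOn_rpow_exp_Ioi (by linarith))
  have htend : Tendsto F atTop (nhds 0) := by
    have ho := rpow_mul_exp_neg_mul_sq_isLittleO_exp_neg (b := 1/2) (by norm_num) (s + 1)
    have heq : (fun x : ℝ => x ^ (s+1) * Real.exp (-(1/2) * x ^ 2)) = F := by
      funext x; rw [hF]; ring_nf
    rw [heq] at ho
    exact ho.tendsto_zero_of_tendsto
      (Real.tendsto_exp_atBot.comp <| tendsto_id.const_mul_atTop_of_neg
        (neg_lt_zero.mpr one_half_pos))
  have key := integral_Ioi_of_hasDerivAt_of_tendsto hcont hderiv hint htend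
  have hF0 : F 0 = 0 := by
    rw [hF]; simp [Real.zero_rpow (by linarith : s + 1 ≠ 0)]
  rw [hF0, sub_zero] at key
  have hsplit : ∫ x in Ioi (0:ℝ), F' x
      = (s+1) * (∫ x in Ioi (0:ℝ), x ^ s * Real.exp (-x ^ 2 / 2))
        - ∫ x in Ioi (0:ℝ), x ^ (s+2) * Real.exp (-x ^ 2 / 2) := by
    rw [hF']
    rw [integral_sub (((integrableOn_rpow_exp_Ioi (by linarith : (-1:ℝ) < s)).const_mul _))
      (integrableOn_rpow_exp_Ioi (by linarith)), MeasureTheory.integral_const_mul]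
  rw [key] at hsplit
  linarith

lemma even_moment_eq {k : ℝ} (hk : 0 ≤ k) (m : ℕ) :
    ∫ x : ℝ, x ^ (2 * m) * wt k x
      = 2 * ∫ t in Ioi (0:ℝ), t ^ (((2 * m : ℕ) : ℝ) + 2 * k) * Real.exp (-t ^ 2 / 2) := by
  rw [← integral_comp_abs (f := fun t => t ^ (((2 * m : ℕ) : ℝ) + 2 * k) * Real.exp (-t ^ 2 / 2))]
  congr 1; funext x
  rw [abs_rpow_add _ _ (by positivity) (by positivity), Real.rpow_natCast, sq_abs]
  have hpow : |x| ^ (2 * m) = x ^ (2 * m) := by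
    rw [pow_mul, pow_mul, sq_abs]
  rw [hpow]
  unfold wt; ring

lemma moment_rec {k : ℝ} (hk : 0 ≤ k) (m : ℕ) :
    ∫ x : ℝ, x ^ (2 * m + 2) * wt k x
      = ((2 * m : ℕ) + 1 + 2 * k) * ∫ x : ℝ, x ^ (2 * m) * wt k x := by
  have h1 := even_moment_eq hk (m + 1)
  have h2 := even_moment_eq hk m
  have hs : (0:ℝ) ≤ ((2 * m : ℕ) : ℝ) + 2 * k := by positivity
  have hJ := J_rec hs
  have hexp : (((2 * (m+1) : ℕ)) : ℝ) + 2 * k = (((2 * m : ℕ) : ℝ) + 2 * k) + 2 := by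
    push_cast; ring
  rw [hexp] at h1
  have hn : 2 * (m + 1) = 2 * m + 2 := by ring
  rw [hn] at h1
  rw [h1, h2, hJ]; ring

lemma monomial_comp_neg (n : ℕ) (a : ℝ) :
    ((monomial n a : ℝ[X]).comp (-X)) = (-1) ^ n * monomial n a := by
  rw [← C_mul_X_pow_eq_monomial, mul_comp, C_comp, pow_comp, X_comp, neg_pow]
  ring

lemma T_adjoint {k : ℝ} (hk : 0 ≤ k) (p : ℝ[X]) :
    ∫ x : ℝ, (dunklT k p).eval x * wt k x = ∫ x : ℝ, (X * p).eval x * wt k x := by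
  induction p using Polynomial.induction_on' with
  | add f g hf hg =>
      rw [dunklT_add]
      have h1 : (fun x : ℝ => (dunklT k f + dunklT k g).eval x * wt k x)
          = fun x => (dunklT k f).eval x * wt k x + (dunklT k g).eval x * wt k x := by
        funext x; rw [eval_add]; ring
      have h2 : (fun x : ℝ => (X * (f + g)).eval x * wt k x)
          = fun x => (X * f).eval x * wt k x + (X * g).eval x * wt k x := by
        funext x; simp only [eval_mul, eval_add, eval_X]; ring
      rw [h1, h2,
        MeasureTheory.integral_add (integrable_poly_wt hk _) (integrable_poly_wt hk _),
        MeasureTheory.integral_add (integrable_poly_wt hk _) (integrable_poly_wt hk _),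
        hf, hg]
  | monomial n a =>
      rcases Nat.even_or_odd n with he | ho
      · have hcomp : ((monomial n a : ℝ[X]).comp (-X)) = monomial n a := by
          rw [monomial_comp_neg, he.neg_one_pow, one_mul]
        rw [integral_odd_wt _ (dunklT_odd_parity k _ hcomp),
          integral_odd_wt (X * monomial n a) (by rw [mul_comp, X_comp, hcomp]; ring)]
      · obtain ⟨m, rfl⟩ := ho
        have hq : (monomial (2*m+1) a : ℝ[X]) - (monomial (2*m+1) a : ℝ[X]).comp (-X)
            = X * (2 * monomial (2*m) a) := by
          rw [monomial_comp_neg, Odd.neg_one_pow ⟨m, by ring⟩]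
          rw [show (X : ℝ[X]) * (2 * monomial (2*m) a) = 2 * (X * monomial (2*m) a) by ring,
            X_mul_monomial]
          ring
        have hdT : dunklT k (monomial (2*m+1) a)
            = monomial (2*m+1-1) (a * (2*m+1)) + C k * (2 * monomial (2*m) a) := by
          rw [dunklT, derivative_monomial, hq, mul_divByMonic_cancel_left _ monic_X]
          norm_num
        have hL : (fun x : ℝ => (dunklT k (monomial (2*m+1) a)).eval x * wt k x)
            = fun x => (a * (2*m+1) + 2*k*a) * (x ^ (2*m) * wt k x) := by
          funext x
          rw [hdT]
          simp only [eval_add, eval_mul, eval_C, eval_monomial, eval_ofNat,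
            Nat.add_sub_cancel]
          ring
        have hR : (fun x : ℝ => (X * monomial (2*m+1) a).eval x * wt k x)
            = fun x => a * (x ^ (2*m+2) * wt k x) := by
          funext x
          simp only [eval_mul, eval_X, eval_monomial]
          ring
        rw [hL, hR, MeasureTheory.integral_const_mul, MeasureTheory.integral_const_mul,
          moment_rec hk m]
        push_cast; ring

/-- Adjoint relation for the `ℤ₂` Dunkl operator: with `T* g(x) = x g(x) - (Tg)(x)` and the
measure `|x|^{2k} e^{-x²/2} dx` on `ℝ`, `∫ (Tf) g dμ = ∫ f (T*g) dμ` for polynomials. -/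
theorem dunkl_adjoint (k : ℝ) (hk : 0 ≤ k) (f g : Polynomial ℝ) :
    ∫ x : ℝ, (dunklT k f).eval x * g.eval x * (|x| ^ (2 * k) * Real.exp (-x ^ 2 / 2)) =
      ∫ x : ℝ, f.eval x * (x * g.eval x - (dunklT k g).eval x) *
        (|x| ^ (2 * k) * Real.exp (-x ^ 2 / 2)) := by
  set Pf := (f - f.comp (-X)) /ₘ X with hPf
  set Pg := (g - g.comp (-X)) /ₘ X with hPg
  have hL : (fun x : ℝ => (dunklT k f).eval x * g.eval x * (|x| ^ (2 * k) * Real.exp (-x ^ 2 / 2)))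
      = fun x => (dunklT k (f*g)).eval x * wt k x + (C k * (X * (Pf * Pg))).eval x * wt k x
          + (f * (X * g - dunklT k g)).eval x * wt k x - (X * (f * g)).eval x * wt k x := by
    funext x
    have hkey := congrArg (eval x) (key_poly k f g)
    simp only [eval_add, eval_mul, eval_sub, eval_X, eval_C] at hkey ⊢
    have : (|x| ^ (2 * k) * Real.exp (-x ^ 2 / 2)) = wt k x := rfl
    rw [this]
    linear_combination wt k x * hkey
  have hR : (fun x : ℝ => f.eval x * (x * g.eval x - (dunklT k g).eval x) *
        (|x| ^ (2 * k) * Real.exp (-x ^ 2 / 2)))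
      = fun x => (f * (X * g - dunklT k g)).eval x * wt k x := by
    funext x
    simp only [eval_mul, eval_sub, eval_X]
    rfl
  have i1 : Integrable (fun x : ℝ => (dunklT k (f * g)).eval x * wt k x) :=
    integrable_poly_wt hk _
  have i2 : Integrable (fun x : ℝ => (C k * (X * (Pf * Pg))).eval x * wt k x) :=
    integrable_poly_wt hk _
  have i3 : Integrable (fun x : ℝ => (f * (X * g - dunklT k g)).eval x * wt k x) :=
    integrable_poly_wt hk _
  have i4 : Integrable (fun x : ℝ => (X * (f * g)).eval x * wt k x) :=
    integrable_poly_wt hk _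
  have i12 : Integrable (fun x : ℝ => (dunklT k (f * g)).eval x * wt k x
      + (C k * (X * (Pf * Pg))).eval x * wt k x) := i1.add i2
  have i123 : Integrable (fun x : ℝ => ((dunklT k (f * g)).eval x * wt k x
      + (C k * (X * (Pf * Pg))).eval x * wt k x)
      + (f * (X * g - dunklT k g)).eval x * wt k x) := i12.add i3
  rw [hL, hR, MeasureTheory.integral_sub i123 i4, MeasureTheory.integral_add i12 i3,
    MeasureTheory.integral_add i1 i2]
  have hodd : (C k * (X * (Pf * Pg))).comp (-X) = -(C k * (X * (Pf * Pg))) := by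
    simp only [mul_comp, C_comp, X_comp, neg_comp]
    rw [hPf, hPg, P_comp_neg, P_comp_neg, ← hPf, ← hPg]
    ring
  rw [integral_odd_wt _ hodd, T_adjoint hk (f * g)]
  ring
end
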